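/- arXiv:1908.03962 — 6 statements merged into one kernel-verified Lean document; each statement's English description precedes it below -/
import Mathlib

section
/- For A > 0, B ∈ ℝ, C ∈ ℝ with C + √(C^2 + A B) > 0 (and C^2 + A B ≥ 0), the function U(ξ) = A^{1/q} / (C + √(C^2 + A B) · cosh(q √A ξ))^{1/q}, for q a positive integer, satisfies the first-order ODE (U')^2 = A U^2 − B U^{2q+2} − 2C U^{q+2} for all real ξ. -/
/-!
Write `D ξ = C + s cosh (k ξ)` with `s = √(C² + AB)` and `k = q√A`, so that `U^q = A / D`.
Logarithmic differentiation gives `U' = -(U/q) · D'/D`, and `sinh² = cosh² - 1` together with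
`s² = C² + AB` gives the first integral `D'² = k² (D² - 2CD - AB)` of the denominator.
Substituting `A/D = U^q` turns `(U')² = A U² (1 - 2C/D - AB/D²)` into the claimed equation.
-/

open Real

theorem hasDerivAt_const_div_rpow {f : ℝ → ℝ} {f' x : ℝ} (a p : ℝ) (hf : HasDerivAt f f' x)
    (hx : 0 < f x) :
    HasDerivAt (fun y => a / f y ^ p) (-p * (a / f x ^ p) * (f' / f x)) x := by
  have hpow := hf.rpow_const (p := p) (Or.inl hx.ne')
  refine ((hasDerivAt_const x a).div hpow (rpow_pos_of_pos hx p).ne').congr_deriv ?_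
  rw [rpow_sub_one hx.ne']
  field_simp
  ring

theorem cosh_profile_deriv_sq (A B C s k x : ℝ) (hs : s ^ 2 = C ^ 2 + A * B) :
    (s * (sinh (k * x) * k)) ^ 2
      = k ^ 2 * ((C + s * cosh (k * x)) ^ 2 - 2 * C * (C + s * cosh (k * x)) - A * B) := by
  linear_combination s ^ 2 * k ^ 2 * sinh_sq (k * x) - k ^ 2 * hs

theorem sq_log_deriv_eq_of_pow_eq_div {q : ℕ} (hq : q ≠ 0) {A B C k u d d' : ℝ} (hd : d ≠ 0)
    (hu : u ^ q = A / d) (hk : k ^ 2 = q ^ 2 * A)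
    (hd' : d' ^ 2 = k ^ 2 * (d ^ 2 - 2 * C * d - A * B)) :
    (-(1 / q) * u * (d' / d)) ^ 2 = A * u ^ 2 - B * u ^ (2 * q + 2) - 2 * C * u ^ (q + 2) := by
  have hqR : (q : ℝ) ≠ 0 := Nat.cast_ne_zero.mpr hq
  rw [pow_add, mul_comm 2 q, pow_add, pow_mul, hu]
  field_simp
  linear_combination u ^ 2 * hd' + u ^ 2 * (d ^ 2 - 2 * C * d - A * B) * hk

/-- For A > 0, C² + AB ≥ 0 and C + √(C²+AB) > 0, the line-soliton profile
U(ξ) = A^{1/q} / (C + √(C²+AB) cosh(q√A ξ))^{1/q}, q a positive integer,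
satisfies (U')² = A U² − B U^{2q+2} − 2C U^{q+2} for all real ξ. -/
theorem stmt4 (q : ℕ) (hq : 0 < q) (A B C : ℝ) (hA : 0 < A)
    (hΔ : 0 ≤ C ^ 2 + A * B) (hpos : 0 < C + Real.sqrt (C ^ 2 + A * B))
    (U : ℝ → ℝ)
    (hU : U = fun ξ => A ^ ((1 : ℝ) / q) /
        (C + Real.sqrt (C ^ 2 + A * B) * Real.cosh (q * Real.sqrt A * ξ)) ^ ((1 : ℝ) / q)) :
    ∀ ξ : ℝ, (deriv U ξ) ^ 2
      = A * U ξ ^ 2 - B * U ξ ^ (2 * q + 2) - 2 * C * U ξ ^ (q + 2) := by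
  intro ξ
  set s := √(C ^ 2 + A * B)
  set k := (q : ℝ) * √A
  set D := fun x => C + s * cosh (k * x)
  have hD : 0 < D ξ := by
    have hcosh := one_le_cosh (k * ξ)
    nlinarith [sqrt_nonneg (C ^ 2 + A * B)]
  have hD' : HasDerivAt D (s * (sinh (k * ξ) * k)) ξ :=
    (((hasDerivAt_id ξ).const_mul k).cosh.const_mul s).const_add C |>.congr_deriv (by simp)
  have hUpow : U ξ ^ q = A / D ξ := by
    rw [hU, div_pow, one_div, rpow_inv_natCast_pow hA.le hq.ne',
      rpow_inv_natCast_pow hD.le hq.ne']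
  have hU' : HasDerivAt U (-(1 / q) * U ξ * (s * (sinh (k * ξ) * k) / D ξ)) ξ := by
    subst hU
    exact hasDerivAt_const_div_rpow _ _ hD' hD
  rw [hU'.deriv]
  exact sq_log_deriv_eq_of_pow_eq_div hq.ne' hD.ne' hUpow (by rw [mul_pow, sq_sqrt hA.le])
    (cosh_profile_deriv_sq A B C s k ξ (sq_sqrt hΔ))
end

section
/- For A > 0, C > 0, and A = C^2/|B| with B < 0, the line-shock profile U(ξ) = A^{1/q} / (C(1 + exp(−q√A ξ)))^{1/q}, q a positive integer, satisfies (U')^2 = A U^2 − B U^{2q+2} − 2C U^{q+2} for all real ξ, and moreover U(ξ) → 0 as ξ → −∞ and U(ξ) → (A/C)^{1/q} as ξ → +∞. -/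
/-!
`U ^ q = w` where `w ξ = (A / C) / (1 + exp (-(q √A ξ)))` is a logistic function, solving
`w' = q √A w (1 - w / (A / C))`. Hence `U = w ^ (1 / q)` solves the Bernoulli equation
`U' = √A U (1 - (C / A) U ^ q)`; squaring it and using `C ^ 2 / A = -B` gives the identity.
The limits of `U` are those of `w`, raised to the power `1 / q`.
-/

open Real Filter Topology

noncomputable def logistic (K r ξ : ℝ) : ℝ := K / (1 + exp (-(r * ξ)))

lemma logistic_pos {K : ℝ} (hK : 0 < K) (r ξ : ℝ) : 0 < logistic K r ξ := by
  unfold logistic; positivity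

lemma hasDerivAt_logistic (K r ξ : ℝ) :
    HasDerivAt (logistic K r) (r * logistic K r ξ * (1 - logistic K r ξ / K)) ξ := by
  have hE : HasDerivAt (fun ξ => 1 + exp (-(r * ξ))) (exp (-(r * ξ)) * -(r * 1)) ξ :=
    (((hasDerivAt_id ξ).const_mul r).neg.exp).const_add 1
  have h : HasDerivAt (logistic K r) _ ξ := (hasDerivAt_const ξ K).div hE (by positivity)
  convert h using 1
  rcases eq_or_ne K 0 with rfl | hK
  · simp [logistic]
  · simp only [logistic]
    field_simp
    ring

lemma tendsto_logistic_atTop (K : ℝ) {r : ℝ} (hr : 0 < r) :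
    Tendsto (logistic K r) atTop (𝓝 K) := by
  have hE : Tendsto (fun ξ => exp (-(r * ξ))) atTop (𝓝 0) :=
    tendsto_exp_neg_atTop_nhds_zero.comp (tendsto_id.const_mul_atTop hr)
  have h : Tendsto (logistic K r) atTop (𝓝 (K / (1 + 0))) :=
    tendsto_const_nhds.div (tendsto_const_nhds.add hE) (by norm_num)
  simpa using h

lemma tendsto_logistic_atBot (K : ℝ) {r : ℝ} (hr : 0 < r) :
    Tendsto (logistic K r) atBot (𝓝 0) := by
  have hE : Tendsto (fun ξ => exp (-(r * ξ))) atBot atTop := by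
    refine tendsto_exp_atTop.comp ?_
    simpa using (tendsto_neg_atBot_atTop.const_mul_atTop hr)
  exact tendsto_const_nhds.div_atTop (tendsto_atTop_add_const_left _ 1 hE)

lemma hasDerivAt_logistic_rpow {K : ℝ} (hK : 0 < K) (r p ξ : ℝ) :
    HasDerivAt (fun ξ => logistic K r ξ ^ p)
      (p * r * (1 - logistic K r ξ / K) * logistic K r ξ ^ p) ξ := by
  have hw := logistic_pos hK r ξ
  convert (hasDerivAt_logistic K r ξ).rpow_const (p := p) (Or.inl hw.ne') using 1
  rw [rpow_sub_one hw.ne']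
  field_simp

lemma bernoulli_rhs_sq {A B C : ℝ} (hA : 0 < A) (hAB : A * B = -C ^ 2) (q : ℕ) (u : ℝ) :
    (√A * (1 - u ^ q / (A / C)) * u) ^ 2
      = A * u ^ 2 - B * u ^ (2 * q + 2) - 2 * C * u ^ (q + 2) := by
  have hB : B = -C ^ 2 / A := by field_simp; linarith
  rw [mul_pow, mul_pow, sq_sqrt hA.le, hB]
  field_simp
  ring

/-- For B < 0, C > 0 and A = C²/|B|, the line-shock profile
U(ξ) = A^{1/q} / (C(1 + exp(−q√A ξ)))^{1/q}, q a positive integer, satisfies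
(U')² = A U² − B U^{2q+2} − 2C U^{q+2} for all real ξ, with U → 0 as ξ → −∞
and U → (A/C)^{1/q} as ξ → +∞. -/
theorem stmt5 (q : ℕ) (hq : 0 < q) (B C : ℝ) (hB : B < 0) (hC : 0 < C)
    (A : ℝ) (hA : A = C ^ 2 / |B|)
    (U : ℝ → ℝ)
    (hU : U = fun ξ => A ^ ((1 : ℝ) / q) /
        (C * (1 + Real.exp (-(q * Real.sqrt A * ξ)))) ^ ((1 : ℝ) / q)) :
    (∀ ξ : ℝ, (deriv U ξ) ^ 2
        = A * U ξ ^ 2 - B * U ξ ^ (2 * q + 2) - 2 * C * U ξ ^ (q + 2)) ∧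
    Filter.Tendsto U Filter.atBot (nhds 0) ∧
    Filter.Tendsto U Filter.atTop (nhds ((A / C) ^ ((1 : ℝ) / q))) := by
  have hA0 : 0 < A := hA ▸ div_pos (pow_pos hC 2) (abs_pos.2 hB.ne)
  have hAB : A * B = -C ^ 2 := by
    rw [hA, abs_of_neg hB]; field_simp [hB.ne]
  have hr : 0 < q * √A := mul_pos (by exact_mod_cast hq) (sqrt_pos.2 hA0)
  have hU' : U = fun ξ => logistic (A / C) (q * √A) ξ ^ ((1 : ℝ) / q) := by
    ext ξ
    rw [hU, logistic, div_div, div_rpow hA0.le (by positivity)]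
  have hUq (ξ : ℝ) : U ξ ^ q = logistic (A / C) (q * √A) ξ := by
    rw [hU', one_div, rpow_inv_natCast_pow (logistic_pos (by positivity) _ _).le hq.ne']
  refine ⟨fun ξ => ?_, ?_, ?_⟩
  · have hderiv := hasDerivAt_logistic_rpow (div_pos hA0 hC) (q * √A) (1 / q) ξ
    have hrate : 1 / (q : ℝ) * (q * √A) = √A := by field_simp
    have hUξ : logistic (A / C) (q * √A) ξ ^ ((1 : ℝ) / q) = U ξ := by rw [hU']
    rw [← hU', hUξ, ← hUq, hrate] at hderiv
    rw [hderiv.deriv, bernoulli_rhs_sq hA0 hAB]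
  · rw [hU', ← zero_rpow (by positivity : (1 : ℝ) / q ≠ 0)]
    exact (tendsto_logistic_atBot _ hr).rpow_const (Or.inr (by positivity))
  · rw [hU']
    exact (tendsto_logistic_atTop _ hr).rpow_const (Or.inr (by positivity))
end

section
/- If U : ℝ → ℝ is smooth, satisfies (σ₂μ² − ν) U' + (σ₁ U^{2q} + (a+b)μ U^q) U' + U''' = 0 with q a positive integer, and U, U', U'' → 0 as ξ → −∞, then U satisfies the first integral (U')² = (ν − σ₂μ²) U² − (σ₁/((q+1)(2q+1))) U^{2q+2} − (2(a+b)μ/((q+1)(q+2))) U^{q+2}. -/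
/-!
Writing `Φ' = φ` with `Φ(0) = 0` for the nonlinearity `φ(u) = σ₂μ² − ν + σ₁u^{2q} + (a+b)μu^q`,
the equation reads `(U'' + Φ(U))' = 0`, and the decay at `−∞` forces `U'' + Φ(U) = 0`.
Multiplying by `2U'` gives `((U')² + 2Ψ(U))' = 0` with `Ψ' = Φ`, `Ψ(0) = 0`, and the decay
again forces `(U')² = −2Ψ(U)`, which is the stated first integral.
-/

open Filter Topology

theorem eq_of_forall_hasDerivAt_zero_of_tendsto {E : Type*} [NormedAddCommGroup E]
    [NormedSpace ℝ E] {f : ℝ → E} {l : Filter ℝ} [l.NeBot] {c : E}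
    (hf : ∀ x, HasDerivAt f 0 x) (hc : Tendsto f l (𝓝 c)) (x : ℝ) : f x = c := by
  have hconst : f = fun _ => f x :=
    funext fun y => is_const_of_deriv_eq_zero (fun z => (hf z).differentiableAt)
      (fun z => (hf z).deriv) y x
  rw [hconst] at hc
  exact tendsto_nhds_unique tendsto_const_nhds hc

theorem add_comp_eq_zero_of_tendsto {w w' v v' Φ φ : ℝ → ℝ} {l : Filter ℝ} [l.NeBot]
    (hw : ∀ x, HasDerivAt w (w' x) x) (hv : ∀ x, HasDerivAt v (v' x) x)
    (hΦ : ∀ y, HasDerivAt Φ (φ y) y) (hΦ0 : Φ 0 = 0)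
    (hwv : ∀ x, w' x + φ (v x) * v' x = 0)
    (hw0 : Tendsto w l (𝓝 0)) (hv0 : Tendsto v l (𝓝 0)) (x : ℝ) :
    w x + Φ (v x) = 0 := by
  have hderiv : ∀ x, HasDerivAt (fun x => w x + Φ (v x)) 0 x := fun x => by
    have h := (hw x).add ((hΦ (v x)).comp x (hv x))
    rwa [hwv x] at h
  have hΦv : Tendsto (fun x => Φ (v x)) l (𝓝 0) :=
    hΦ0 ▸ (hΦ 0).continuousAt.tendsto.comp hv0
  exact eq_of_forall_hasDerivAt_zero_of_tendsto hderiv (by simpa using hw0.add hΦv) x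

theorem ContDiff.hasDerivAt_iteratedDeriv {𝕜 F : Type*} [NontriviallyNormedField 𝕜]
    [NormedAddCommGroup F] [NormedSpace 𝕜 F] {f : 𝕜 → F} {n : WithTop ℕ∞}
    (hf : ContDiff 𝕜 n f) {k : ℕ} (hk : (k : WithTop ℕ∞) < n) (x : 𝕜) :
    HasDerivAt (iteratedDeriv k f) (iteratedDeriv (k + 1) f x) x := by
  rw [iteratedDeriv_succ]
  exact (hf.differentiable_iteratedDeriv k hk x).hasDerivAt

theorem hasDerivAt_pow_succ_div (n : ℕ) (y : ℝ) :
    HasDerivAt (fun y : ℝ => y ^ (n + 1) / ((n : ℝ) + 1)) (y ^ n) y := by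
  refine ((hasDerivAt_pow (n + 1) y).div_const ((n : ℝ) + 1)).congr_deriv ?_
  push_cast
  field_simp

theorem sq_deriv_add_comp_eq_zero_of_tendsto {U Φ φ Ψ : ℝ → ℝ} {l : Filter ℝ} [l.NeBot]
    (hU : ContDiff ℝ 3 U) (hΦ : ∀ y, HasDerivAt Φ (φ y) y) (hΦ0 : Φ 0 = 0)
    (hΨ : ∀ y, HasDerivAt Ψ (Φ y) y) (hΨ0 : Ψ 0 = 0)
    (hode : ∀ ξ, iteratedDeriv 3 U ξ + φ (U ξ) * deriv U ξ = 0)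
    (h0 : Tendsto U l (𝓝 0)) (h1 : Tendsto (deriv U) l (𝓝 0))
    (h2 : Tendsto (iteratedDeriv 2 U) l (𝓝 0)) (ξ : ℝ) :
    deriv U ξ ^ 2 + 2 * Ψ (U ξ) = 0 := by
  have hU₀ (ξ : ℝ) : HasDerivAt U (deriv U ξ) ξ := by
    simpa using hU.hasDerivAt_iteratedDeriv (k := 0) (by norm_num) ξ
  have hU₁ (ξ : ℝ) : HasDerivAt (deriv U) (iteratedDeriv 2 U ξ) ξ := by
    simpa using hU.hasDerivAt_iteratedDeriv (k := 1) (by norm_num) ξ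
  have hU₂ (ξ : ℝ) : HasDerivAt (iteratedDeriv 2 U) (iteratedDeriv 3 U ξ) ξ :=
    hU.hasDerivAt_iteratedDeriv (k := 2) (by norm_num) ξ
  have hsecond (ξ : ℝ) : iteratedDeriv 2 U ξ + Φ (U ξ) = 0 :=
    add_comp_eq_zero_of_tendsto hU₂ hU₀ hΦ hΦ0 hode h2 h0 ξ
  exact add_comp_eq_zero_of_tendsto (w := fun ξ => deriv U ξ ^ 2) (Φ := fun y => 2 * Ψ y)
    (fun ξ => (hU₁ ξ).pow 2) hU₀ (fun y => (hΨ y).const_mul 2) (by simp [hΨ0])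
    (fun ξ => by linear_combination 2 * deriv U ξ * hsecond ξ) (by simpa using h1.pow 2) h0 ξ

theorem stmt7_general (q : ℕ) (a b μ ν σ₁ σ₂ : ℝ)
    (U : ℝ → ℝ) (hU : ContDiff ℝ 3 U)
    (hode : ∀ ξ : ℝ,
      (σ₂ * μ ^ 2 - ν) * deriv U ξ
        + (σ₁ * U ξ ^ (2 * q) + (a + b) * μ * U ξ ^ q) * deriv U ξ
        + iteratedDeriv 3 U ξ = 0)
    (h0 : Filter.Tendsto U Filter.atBot (nhds 0))
    (h1 : Filter.Tendsto (deriv U) Filter.atBot (nhds 0))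
    (h2 : Filter.Tendsto (iteratedDeriv 2 U) Filter.atBot (nhds 0)) :
    ∀ ξ : ℝ, (deriv U ξ) ^ 2
      = (ν - σ₂ * μ ^ 2) * U ξ ^ 2
        - (σ₁ / (((q : ℝ) + 1) * (2 * (q : ℝ) + 1))) * U ξ ^ (2 * q + 2)
        - (2 * (a + b) * μ / (((q : ℝ) + 1) * ((q : ℝ) + 2))) * U ξ ^ (q + 2) := by
  set c := σ₂ * μ ^ 2 - ν
  set Φ : ℝ → ℝ := fun y => c * y + σ₁ * (y ^ (2 * q + 1) / ((2 * q : ℕ) + 1))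
    + (a + b) * μ * (y ^ (q + 1) / ((q : ℝ) + 1))
  have hΦ (y : ℝ) : HasDerivAt Φ (c + σ₁ * y ^ (2 * q) + (a + b) * μ * y ^ q) y := by
    refine ((((hasDerivAt_id y).const_mul c).add
      ((hasDerivAt_pow_succ_div (2 * q) y).const_mul σ₁)).add
      ((hasDerivAt_pow_succ_div q y).const_mul ((a + b) * μ))).congr_deriv ?_
    ring
  set Ψ : ℝ → ℝ := fun y => c * (y ^ (1 + 1) / ((1 : ℕ) + 1))
    + σ₁ / ((2 * q : ℕ) + 1) * (y ^ (2 * q + 1 + 1) / ((2 * q + 1 : ℕ) + 1))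
    + (a + b) * μ / ((q : ℝ) + 1) * (y ^ (q + 1 + 1) / ((q + 1 : ℕ) + 1))
  have hΨ (y : ℝ) : HasDerivAt Ψ (Φ y) y := by
    refine (((hasDerivAt_pow_succ_div 1 y).const_mul c).add
      ((hasDerivAt_pow_succ_div (2 * q + 1) y).const_mul _)).add
      ((hasDerivAt_pow_succ_div (q + 1) y).const_mul _) |>.congr_deriv ?_
    simp only [Φ]
    ring
  intro ξ
  rw [← sub_eq_zero, ← sq_deriv_add_comp_eq_zero_of_tendsto hU hΦ (by simp [Φ]) hΨ (by simp [Ψ])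
    (fun ξ => by linear_combination hode ξ) h0 h1 h2 ξ]
  simp only [Ψ, c]
  push_cast
  field_simp
  ring

/-- If U is C³, satisfies (σ₂μ² − ν)U' + (σ₁U^{2q} + (a+b)μU^q)U' + U''' = 0,
and U, U', U'' → 0 as ξ → −∞, then U satisfies the first integral
(U')² = (ν − σ₂μ²)U² − (σ₁/((q+1)(2q+1)))U^{2q+2} − (2(a+b)μ/((q+1)(q+2)))U^{q+2}. -/
theorem stmt7 (q : ℕ) (hq : 0 < q) (a b μ ν σ₁ σ₂ : ℝ)
    (hσ₁ : σ₁ = 1 ∨ σ₁ = -1) (hσ₂ : σ₂ = 1 ∨ σ₂ = -1)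
    (U : ℝ → ℝ) (hU : ContDiff ℝ 3 U)
    (hode : ∀ ξ : ℝ,
      (σ₂ * μ ^ 2 - ν) * deriv U ξ
        + (σ₁ * U ξ ^ (2 * q) + (a + b) * μ * U ξ ^ q) * deriv U ξ
        + iteratedDeriv 3 U ξ = 0)
    (h0 : Filter.Tendsto U Filter.atBot (nhds 0))
    (h1 : Filter.Tendsto (deriv U) Filter.atBot (nhds 0))
    (h2 : Filter.Tendsto (iteratedDeriv 2 U) Filter.atBot (nhds 0)) :
    ∀ ξ : ℝ, (deriv U ξ) ^ 2
      = (ν - σ₂ * μ ^ 2) * U ξ ^ 2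
        - (σ₁ / (((q : ℝ) + 1) * (2 * (q : ℝ) + 1))) * U ξ ^ (2 * q + 2)
        - (2 * (a + b) * μ / (((q : ℝ) + 1) * ((q : ℝ) + 2))) * U ξ ^ (q + 2) :=
  stmt7_general q a b μ ν σ₁ σ₂ U hU hode h0 h1 h2
end

section
/- The Frechet derivative (linearization) of the nonlinear operator F[w] = w_{tx} + (σ₁ w_x^{2q} + a w_x^{q−1} w_y) w_{xx} + b w_x^q w_{xy} + w_{xxxx} + σ₂ w_{yy} is self-adjoint (i.e., equal to its formal adjoint modulo total derivatives) if and only if a = (1/2) b q. In particular, the modified gKP potential equation possesses a local Lagrangian in w iff a = bq/2. -/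
/-- Total derivative in t of a function w(t,x,y). -/
noncomputable def Dt (f : ℝ → ℝ → ℝ → ℝ) : ℝ → ℝ → ℝ → ℝ :=
  fun t x y => deriv (fun s => f s x y) t

/-- Total derivative in x of a function w(t,x,y). -/
noncomputable def Dx (f : ℝ → ℝ → ℝ → ℝ) : ℝ → ℝ → ℝ → ℝ :=
  fun t x y => deriv (fun s => f t s y) x

/-- Total derivative in y of a function w(t,x,y). -/
noncomputable def Dy (f : ℝ → ℝ → ℝ → ℝ) : ℝ → ℝ → ℝ → ℝ :=
  fun t x y => deriv (fun s => f t x s) y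

/-- The Frechet derivative (linearization) at w of
F[w] = w_{tx} + (σ₁w_x^{2q} + a w_x^{q−1}w_y)w_{xx} + b w_x^q w_{xy} + w_{xxxx} + σ₂w_{yy},
applied to P. -/
noncomputable def Frechet (q : ℕ) (a b σ₁ σ₂ : ℝ) (w P : ℝ → ℝ → ℝ → ℝ) :
    ℝ → ℝ → ℝ → ℝ :=
  fun t x y =>
    Dt (Dx P) t x y
    + ((σ₁ * (2 * (q : ℝ)) * (Dx w t x y) ^ (2 * q - 1)
          + a * ((q : ℝ) - 1) * (Dx w t x y) ^ (q - 2) * Dy w t x y) * Dx (Dx w) t x y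
        + b * (q : ℝ) * (Dx w t x y) ^ (q - 1) * Dx (Dy w) t x y) * Dx P t x y
    + a * (Dx w t x y) ^ (q - 1) * Dx (Dx w) t x y * Dy P t x y
    + (σ₁ * (Dx w t x y) ^ (2 * q) + a * (Dx w t x y) ^ (q - 1) * Dy w t x y)
        * Dx (Dx P) t x y
    + b * (Dx w t x y) ^ q * Dx (Dy P) t x y
    + σ₂ * Dy (Dy P) t x y
    + Dx (Dx (Dx (Dx P))) t x y

/-- The formal adjoint of the Frechet derivative at w, applied to P
(obtained by integration by parts). -/
noncomputable def FrechetAdjoint (q : ℕ) (a b σ₁ σ₂ : ℝ) (w P : ℝ → ℝ → ℝ → ℝ) :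
    ℝ → ℝ → ℝ → ℝ :=
  fun t x y =>
    Dt (Dx P) t x y
    - Dx (fun t x y =>
        ((σ₁ * (2 * (q : ℝ)) * (Dx w t x y) ^ (2 * q - 1)
            + a * ((q : ℝ) - 1) * (Dx w t x y) ^ (q - 2) * Dy w t x y) * Dx (Dx w) t x y
          + b * (q : ℝ) * (Dx w t x y) ^ (q - 1) * Dx (Dy w) t x y) * P t x y) t x y
    - Dy (fun t x y => a * (Dx w t x y) ^ (q - 1) * Dx (Dx w) t x y * P t x y) t x y
    + Dx (Dx (fun t x y =>
        (σ₁ * (Dx w t x y) ^ (2 * q) + a * (Dx w t x y) ^ (q - 1) * Dy w t x y)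
          * P t x y)) t x y
    + Dx (Dy (fun t x y => b * (Dx w t x y) ^ q * P t x y)) t x y
    + σ₂ * Dy (Dy P) t x y
    + Dx (Dx (Dx (Dx P))) t x y

noncomputable def DD2 (F : ℝ × ℝ × ℝ → ℝ) : ℝ × ℝ × ℝ → ℝ := fun p => fderiv ℝ F p (0,1,0)
noncomputable def DD3 (F : ℝ × ℝ × ℝ → ℝ) : ℝ × ℝ × ℝ → ℝ := fun p => fderiv ℝ F p (0,0,1)

@[fun_prop] lemma DD2.contDiff {F : ℝ × ℝ × ℝ → ℝ} (hF : ContDiff ℝ (⊤ : ℕ∞) F) :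
    ContDiff ℝ (⊤ : ℕ∞) (DD2 F) := (hF.fderiv_right (by simp)).clm_apply contDiff_const
@[fun_prop] lemma DD3.contDiff {F : ℝ × ℝ × ℝ → ℝ} (hF : ContDiff ℝ (⊤ : ℕ∞) F) :
    ContDiff ℝ (⊤ : ℕ∞) (DD3 F) := (hF.fderiv_right (by simp)).clm_apply contDiff_const

@[fun_prop] lemma DD2.differentiable {F : ℝ × ℝ × ℝ → ℝ} (hF : ContDiff ℝ (⊤ : ℕ∞) F) :
    Differentiable ℝ (DD2 F) := (DD2.contDiff hF).differentiable (by simp)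
@[fun_prop] lemma DD3.differentiable {F : ℝ × ℝ × ℝ → ℝ} (hF : ContDiff ℝ (⊤ : ℕ∞) F) :
    Differentiable ℝ (DD3 F) := (DD3.contDiff hF).differentiable (by simp)
@[fun_prop] lemma DD2.continuous {F : ℝ × ℝ × ℝ → ℝ} (hF : ContDiff ℝ (⊤ : ℕ∞) F) :
    Continuous (DD2 F) := (DD2.differentiable hF).continuous
@[fun_prop] lemma DD3.continuous {F : ℝ × ℝ × ℝ → ℝ} (hF : ContDiff ℝ (⊤ : ℕ∞) F) :
    Continuous (DD3 F) := (DD3.differentiable hF).continuous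

lemma Dx_curry (F : ℝ × ℝ × ℝ → ℝ) (hF : Differentiable ℝ F) :
    Dx (fun t x y => F (t, x, y)) = fun t x y => DD2 F (t, x, y) := by
  funext t x y
  have hc : HasDerivAt (fun s : ℝ => ((t, s, y) : ℝ × ℝ × ℝ)) ((0:ℝ), (1:ℝ), (0:ℝ)) x :=
    (hasDerivAt_const x t).prodMk ((hasDerivAt_id x).prodMk (hasDerivAt_const x y))
  exact (HasFDerivAt.comp_hasDerivAt x (hF (t, x, y)).hasFDerivAt hc).deriv

lemma Dy_curry (F : ℝ × ℝ × ℝ → ℝ) (hF : Differentiable ℝ F) :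
    Dy (fun t x y => F (t, x, y)) = fun t x y => DD3 F (t, x, y) := by
  funext t x y
  have hc : HasDerivAt (fun s : ℝ => ((t, x, s) : ℝ × ℝ × ℝ)) ((0:ℝ), (0:ℝ), (1:ℝ)) y :=
    (hasDerivAt_const y t).prodMk ((hasDerivAt_const y x).prodMk (hasDerivAt_id y))
  exact (HasFDerivAt.comp_hasDerivAt y (hF (t, x, y)).hasFDerivAt hc).deriv

lemma DD_comm {F : ℝ × ℝ × ℝ → ℝ} (hF : ContDiff ℝ (⊤ : ℕ∞) F) (u v p : ℝ × ℝ × ℝ) :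
    fderiv ℝ (fun q => fderiv ℝ F q u) p v = fderiv ℝ (fun q => fderiv ℝ F q v) p u := by
  have hd : Differentiable ℝ (fderiv ℝ F) := (hF.fderiv_right (m := (⊤ : ℕ∞)) (by simp)).differentiable (by simp)
  have h1 : ∀ z, HasFDerivAt F (fderiv ℝ F z) z := fun z =>
    (hF.differentiable (by simp) z).hasFDerivAt
  have h2 : HasFDerivAt (fderiv ℝ F) (fderiv ℝ (fderiv ℝ F) p) p := (hd p).hasFDerivAt
  have key : ∀ u v : ℝ × ℝ × ℝ, fderiv ℝ (fun q => fderiv ℝ F q u) p v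
      = (fderiv ℝ (fderiv ℝ F) p v) u := by
    intro u v
    have h3 := ((ContinuousLinearMap.apply ℝ ℝ u).hasFDerivAt.comp p h2).fderiv
    have h4 : fderiv ℝ (fun q => fderiv ℝ F q u) p
        = (ContinuousLinearMap.apply ℝ ℝ u).comp (fderiv ℝ (fderiv ℝ F) p) := h3
    rw [h4]; rfl
  rw [key, key, second_derivative_symmetric h1 h2 v u]

lemma DD23_comm {F : ℝ × ℝ × ℝ → ℝ} (hF : ContDiff ℝ (⊤ : ℕ∞) F) :
    DD3 (DD2 F) = DD2 (DD3 F) :=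
  funext fun p => DD_comm hF (0,1,0) (0,0,1) p

lemma DD2_mul {A B : ℝ × ℝ × ℝ → ℝ} (hA : ContDiff ℝ (⊤ : ℕ∞) A) (hB : ContDiff ℝ (⊤ : ℕ∞) B) :
    DD2 (fun p => A p * B p) = fun p => DD2 A p * B p + A p * DD2 B p := by
  funext p
  show fderiv ℝ (fun p => A p * B p) p (0,1,0) = _
  rw [fderiv_fun_mul (hA.differentiable (by simp) p) (hB.differentiable (by simp) p)]
  simp [DD2, smul_eq_mul]; ring

lemma DD3_mul {A B : ℝ × ℝ × ℝ → ℝ} (hA : ContDiff ℝ (⊤ : ℕ∞) A) (hB : ContDiff ℝ (⊤ : ℕ∞) B) :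
    DD3 (fun p => A p * B p) = fun p => DD3 A p * B p + A p * DD3 B p := by
  funext p
  show fderiv ℝ (fun p => A p * B p) p (0,0,1) = _
  rw [fderiv_fun_mul (hA.differentiable (by simp) p) (hB.differentiable (by simp) p)]
  simp [DD3, smul_eq_mul]; ring

lemma DD2_add {A B : ℝ × ℝ × ℝ → ℝ} (hA : ContDiff ℝ (⊤ : ℕ∞) A) (hB : ContDiff ℝ (⊤ : ℕ∞) B) :
    DD2 (fun p => A p + B p) = fun p => DD2 A p + DD2 B p := by
  funext p
  show fderiv ℝ (fun p => A p + B p) p (0,1,0) = _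
  rw [fderiv_fun_add (hA.differentiable (by simp) p) (hB.differentiable (by simp) p)]; rfl

lemma DD3_add {A B : ℝ × ℝ × ℝ → ℝ} (hA : ContDiff ℝ (⊤ : ℕ∞) A) (hB : ContDiff ℝ (⊤ : ℕ∞) B) :
    DD3 (fun p => A p + B p) = fun p => DD3 A p + DD3 B p := by
  funext p
  show fderiv ℝ (fun p => A p + B p) p (0,0,1) = _
  rw [fderiv_fun_add (hA.differentiable (by simp) p) (hB.differentiable (by simp) p)]; rfl

lemma DD2_pow {A : ℝ × ℝ × ℝ → ℝ} (hA : ContDiff ℝ (⊤ : ℕ∞) A) (n : ℕ) :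
    DD2 (fun p => A p ^ n) = fun p => (n : ℝ) * A p ^ (n - 1) * DD2 A p := by
  funext p
  have h : fderiv ℝ (fun p => A p ^ n) p = (↑n * A p ^ (n - 1)) • fderiv ℝ A p :=
    ((hasDerivAt_pow n (A p)).comp_hasFDerivAt p
      ((hA.differentiable (by simp) p).hasFDerivAt)).fderiv
  show fderiv ℝ (fun p => A p ^ n) p (0,1,0) = _
  rw [h]; simp [DD2, smul_eq_mul]

lemma DD3_pow {A : ℝ × ℝ × ℝ → ℝ} (hA : ContDiff ℝ (⊤ : ℕ∞) A) (n : ℕ) :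
    DD3 (fun p => A p ^ n) = fun p => (n : ℝ) * A p ^ (n - 1) * DD3 A p := by
  funext p
  have h : fderiv ℝ (fun p => A p ^ n) p = (↑n * A p ^ (n - 1)) • fderiv ℝ A p :=
    ((hasDerivAt_pow n (A p)).comp_hasFDerivAt p
      ((hA.differentiable (by simp) p).hasFDerivAt)).fderiv
  show fderiv ℝ (fun p => A p ^ n) p (0,0,1) = _
  rw [h]; simp [DD3, smul_eq_mul]

lemma DD2_const (c : ℝ) : DD2 (fun _ : ℝ × ℝ × ℝ => c) = fun _ => 0 := by
  funext p; show fderiv ℝ (fun _ => c) p (0,1,0) = 0; simp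

lemma DD3_const (c : ℝ) : DD3 (fun _ : ℝ × ℝ × ℝ => c) = fun _ => 0 := by
  funext p; show fderiv ℝ (fun _ => c) p (0,0,1) = 0; simp

lemma self_adjoint (q : ℕ) (hq : 0 < q) (a b σ₁ σ₂ : ℝ) (ha : a = 1 / 2 * b * (q : ℝ))
    (F Pf : ℝ × ℝ × ℝ → ℝ) (hF : ContDiff ℝ (⊤ : ℕ∞) F) (hPf : ContDiff ℝ (⊤ : ℕ∞) Pf) (t x y : ℝ) :
    Frechet q a b σ₁ σ₂ (fun t x y => F (t, x, y)) (fun t x y => Pf (t, x, y)) t x y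
    = FrechetAdjoint q a b σ₁ σ₂ (fun t x y => F (t, x, y)) (fun t x y => Pf (t, x, y)) t x y := by
  have hFd : Differentiable ℝ F := hF.differentiable (by simp)
  have hPd : Differentiable ℝ Pf := hPf.differentiable (by simp)
  have h1 : Dx (fun t x y => F (t, x, y)) = fun t x y => DD2 F (t, x, y) := Dx_curry F hFd
  have h2 : Dy (fun t x y => F (t, x, y)) = fun t x y => DD3 F (t, x, y) := Dy_curry F hFd
  have hF2 : ContDiff ℝ (⊤ : ℕ∞) (DD2 F) := DD2.contDiff hF
  have hF3 : ContDiff ℝ (⊤ : ℕ∞) (DD3 F) := DD3.contDiff hF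
  have hw22 : Dx (fun t x y => DD2 F (t, x, y)) = fun t x y => DD2 (DD2 F) (t, x, y) :=
    Dx_curry (DD2 F) (hF2.differentiable (by simp))
  have hw23 : Dx (fun t x y => DD3 F (t, x, y)) = fun t x y => DD2 (DD3 F) (t, x, y) :=
    Dx_curry (DD3 F) (hF3.differentiable (by simp))
  have hw23' : Dy (fun t x y => DD2 F (t, x, y)) = fun t x y => DD2 (DD3 F) (t, x, y) := by
    rw [Dy_curry (DD2 F) (hF2.differentiable (by simp)), DD23_comm hF]
  have hp1 : Dx (fun t x y => Pf (t, x, y)) = fun t x y => DD2 Pf (t, x, y) :=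
    Dx_curry Pf (hPf.differentiable (by simp))
  have hp2 : Dy (fun t x y => Pf (t, x, y)) = fun t x y => DD3 Pf (t, x, y) :=
    Dy_curry Pf (hPf.differentiable (by simp))
  have hp22 : Dx (fun t x y => DD2 Pf (t, x, y)) = fun t x y => DD2 (DD2 Pf) (t, x, y) :=
    Dx_curry (DD2 Pf) ((DD2.contDiff hPf).differentiable (by simp))
  have hp23 : Dx (fun t x y => DD3 Pf (t, x, y)) = fun t x y => DD2 (DD3 Pf) (t, x, y) :=
    Dx_curry (DD3 Pf) ((DD3.contDiff hPf).differentiable (by simp))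
  simp only [Frechet, FrechetAdjoint, h1, h2, hp1, hp2, hw22, hw23, hw23', hp22, hp23]
  have e1 : Dx (fun t x y =>
        ((σ₁ * (2 * ↑q) * DD2 F (t, x, y) ^ (2 * q - 1) +
            a * (↑q - 1) * DD2 F (t, x, y) ^ (q - 2) * DD3 F (t, x, y)) * DD2 (DD2 F) (t, x, y) +
          b * ↑q * DD2 F (t, x, y) ^ (q - 1) * DD2 (DD3 F) (t, x, y)) * Pf (t, x, y))
      = fun t x y => DD2 (fun p =>
        ((σ₁ * (2 * ↑q) * DD2 F p ^ (2 * q - 1) +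
            a * (↑q - 1) * DD2 F p ^ (q - 2) * DD3 F p) * DD2 (DD2 F) p +
          b * ↑q * DD2 F p ^ (q - 1) * DD2 (DD3 F) p) * Pf p) (t, x, y) :=
    Dx_curry (fun p =>
        ((σ₁ * (2 * ↑q) * DD2 F p ^ (2 * q - 1) +
            a * (↑q - 1) * DD2 F p ^ (q - 2) * DD3 F p) * DD2 (DD2 F) p +
          b * ↑q * DD2 F p ^ (q - 1) * DD2 (DD3 F) p) * Pf p) (by fun_prop)
  have e2 : Dy (fun t x y => a * DD2 F (t, x, y) ^ (q - 1) * DD2 (DD2 F) (t, x, y) * Pf (t, x, y))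
      = fun t x y => DD3 (fun p => a * DD2 F p ^ (q - 1) * DD2 (DD2 F) p * Pf p) (t, x, y) :=
    Dy_curry (fun p => a * DD2 F p ^ (q - 1) * DD2 (DD2 F) p * Pf p) (by fun_prop)
  have e3 : Dx (fun t x y =>
        (σ₁ * DD2 F (t, x, y) ^ (2 * q) + a * DD2 F (t, x, y) ^ (q - 1) * DD3 F (t, x, y)) * Pf (t, x, y))
      = fun t x y => DD2 (fun p =>
        (σ₁ * DD2 F p ^ (2 * q) + a * DD2 F p ^ (q - 1) * DD3 F p) * Pf p) (t, x, y) :=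
    Dx_curry (fun p =>
        (σ₁ * DD2 F p ^ (2 * q) + a * DD2 F p ^ (q - 1) * DD3 F p) * Pf p) (by fun_prop)
  have e3' : Dx (fun t x y => DD2 (fun p =>
        (σ₁ * DD2 F p ^ (2 * q) + a * DD2 F p ^ (q - 1) * DD3 F p) * Pf p) (t, x, y))
      = fun t x y => DD2 (DD2 (fun p =>
        (σ₁ * DD2 F p ^ (2 * q) + a * DD2 F p ^ (q - 1) * DD3 F p) * Pf p)) (t, x, y) :=
    Dx_curry (DD2 (fun p =>
        (σ₁ * DD2 F p ^ (2 * q) + a * DD2 F p ^ (q - 1) * DD3 F p) * Pf p)) (by fun_prop)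
  have e4 : Dy (fun t x y => b * DD2 F (t, x, y) ^ q * Pf (t, x, y))
      = fun t x y => DD3 (fun p => b * DD2 F p ^ q * Pf p) (t, x, y) :=
    Dy_curry (fun p => b * DD2 F p ^ q * Pf p) (by fun_prop)
  have e4' : Dx (fun t x y => DD3 (fun p => b * DD2 F p ^ q * Pf p) (t, x, y))
      = fun t x y => DD2 (DD3 (fun p => b * DD2 F p ^ q * Pf p)) (t, x, y) :=
    Dx_curry (DD3 (fun p => b * DD2 F p ^ q * Pf p)) (by fun_prop)
  rw [e1, e2, e3, e3', e4, e4']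
  simp (disch := fun_prop) only [DD2_mul, DD2_add, DD2_pow, DD2_const, DD3_mul, DD3_add,
    DD3_pow, DD3_const]
  have c1 : DD3 (DD2 F) = DD2 (DD3 F) := DD23_comm hF
  have c2 : DD3 (DD2 (DD2 F)) = DD2 (DD3 (DD2 F)) := DD23_comm hF2
  have en1 : q - 1 - 1 = q - 2 := by omega
  have k1 : ((q - 1 : ℕ) : ℝ) = (q : ℝ) - 1 := by
    rw [Nat.cast_sub hq]; norm_num
  have k2 : ((2 * q - 1 : ℕ) : ℝ) = 2 * (q : ℝ) - 1 := by
    rw [Nat.cast_sub (by omega)]; push_cast; ring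
  have k3 : ((2 * q : ℕ) : ℝ) = 2 * (q : ℝ) := by push_cast; ring
  simp only [c1, c2, en1, k1, k2, k3]
  subst ha
  ring

lemma forward_dir (q : ℕ) (hq : 0 < q) (a b σ₁ σ₂ : ℝ)
    (h : Frechet q a b σ₁ σ₂ (fun _ x _ => x ^ 2 / 2) (fun _ _ y => y) 0 1 0
       = FrechetAdjoint q a b σ₁ σ₂ (fun _ x _ => x ^ 2 / 2) (fun _ _ y => y) 0 1 0) :
    a = 1 / 2 * b * (q : ℝ) := by
  have hw1 : Dx (fun _ x _ : ℝ => x ^ 2 / 2) = fun _ x _ => x := by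
    funext t x y; simp [Dx, deriv_div_const]
  have hw2 : Dy (fun _ x _ : ℝ => x ^ 2 / 2) = fun _ _ _ => (0:ℝ) := by
    funext t x y; simp [Dy]
  have hx1 : Dx (fun _ x _ : ℝ => x) = fun _ _ _ => (1:ℝ) := by
    funext t x y; simp [Dx]
  have hp1 : Dx (fun _ _ y : ℝ => y) = fun _ _ _ => (0:ℝ) := by
    funext t x y; simp [Dx]
  have hp2 : Dy (fun _ _ y : ℝ => y) = fun _ _ _ => (1:ℝ) := by
    funext t x y; simp [Dy]
  have hcx : ∀ c : ℝ, Dx (fun _ _ _ : ℝ => c) = fun _ _ _ => (0:ℝ) := by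
    intro c; funext t x y; simp [Dx]
  have hcy : ∀ c : ℝ, Dy (fun _ _ _ : ℝ => c) = fun _ _ _ => (0:ℝ) := by
    intro c; funext t x y; simp [Dy]
  have hct : ∀ c : ℝ, Dt (fun _ _ _ : ℝ => c) = fun _ _ _ => (0:ℝ) := by
    intro c; funext t x y; simp [Dt]
  simp only [Frechet, FrechetAdjoint, hw1, hw2, hx1, hp1, hp2, hcx, hcy, hct] at h
  have hA : Dx (fun t x y => ((σ₁ * (2 * ↑q) * x ^ (2 * q - 1) + a * (↑q - 1) * x ^ (q - 2) * 0) * 1 +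
        b * ↑q * x ^ (q - 1) * 0) * y) 0 1 0 = 0 := by
    simp [Dx]
  have hB : Dy (fun t x y => a * x ^ (q - 1) * 1 * y) 0 1 0 = a := by
    show deriv (fun s => a * (1:ℝ) ^ (q - 1) * 1 * s) 0 = a
    have e : (fun s : ℝ => a * (1:ℝ) ^ (q - 1) * 1 * s) = fun s => a * s := by
      funext s; simp
    rw [e, deriv_const_mul_field]; simp
  have hC : Dx (Dx fun t x y => (σ₁ * x ^ (2 * q) + a * x ^ (q - 1) * 0) * y) 0 1 0 = 0 := by
    simp [Dx]
  have hD : Dx (Dy fun t x y => b * x ^ q * y) 0 1 0 = b * (q : ℝ) := by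
    show deriv (fun s => deriv (fun u => b * s ^ q * u) 0) 1 = _
    have i1 : (fun s : ℝ => deriv (fun u => b * s ^ q * u) 0) = fun s => b * s ^ q := by
      funext s; rw [deriv_const_mul_field]; simp
    rw [i1, deriv_const_mul_field]
    simp
  rw [hA, hB, hC, hD] at h
  simp [one_pow] at h
  linarith

/-- The Frechet derivative of the modified gKP potential operator is
self-adjoint (Helmholtz condition, i.e. the equation possesses a local
Lagrangian in w) if and only if a = (1/2) b q. -/
theorem stmt9 (q : ℕ) (hq : 0 < q) (a b σ₁ σ₂ : ℝ)
    (hσ₁ : σ₁ = 1 ∨ σ₁ = -1) (hσ₂ : σ₂ = 1 ∨ σ₂ = -1) :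
    (∀ w P : ℝ → ℝ → ℝ → ℝ,
        ContDiff ℝ (⊤ : ℕ∞) (fun p : ℝ × ℝ × ℝ => w p.1 p.2.1 p.2.2) →
        ContDiff ℝ (⊤ : ℕ∞) (fun p : ℝ × ℝ × ℝ => P p.1 p.2.1 p.2.2) →
        ∀ t x y : ℝ,
          Frechet q a b σ₁ σ₂ w P t x y = FrechetAdjoint q a b σ₁ σ₂ w P t x y)
      ↔ a = (1 / 2) * b * (q : ℝ) := by
  constructor
  · intro h
    exact forward_dir q hq a b σ₁ σ₂
      (h (fun _ x _ => x ^ 2 / 2) (fun _ _ y => y)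
        (by exact ContDiff.div_const (by fun_prop) 2) (by fun_prop) 0 1 0)
  · intro ha w P hw hP t x y
    exact self_adjoint q hq a b σ₁ σ₂ ha
      (fun p => w p.1 p.2.1 p.2.2) (fun p => P p.1 p.2.1 p.2.2) hw hP t x y
end

section
/- The pair (T, X, Y) with T = (1/2)w_x², X = w_x w_{xxx} − (1/2)w_{xx}² + (σ₁/(2(q+1))) w_x^{2(q+1)} + (a/(q+1)) w_x^{q+1} w_y − (σ₂/2) w_y², Y = σ₂ w_x w_y − ((a − b − bq)/((q+1)(q+2))) w_x^{q+2}, satisfies the conservation-law identity D_t T + D_x X + D_y Y = w_x · (w_{tx} + (σ₁ w_x^{2q} + a w_x^{q−1} w_y) w_{xx} + b w_x^q w_{xy} + w_{xxxx} + σ₂ w_{yy}) for all smooth w(t,x,y); hence (T,X,Y) is a conservation law of the modified gKP potential equation with multiplier Q = w_x. -/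
/-- Directional derivative operator on functions `ℝ×ℝ×ℝ → ℝ`. -/
noncomputable def Dv (v : ℝ × ℝ × ℝ) (F : ℝ × ℝ × ℝ → ℝ) : ℝ × ℝ × ℝ → ℝ :=
  fun p => fderiv ℝ F p v

lemma Dv_smooth (v : ℝ × ℝ × ℝ) {F : ℝ × ℝ × ℝ → ℝ} (hF : ContDiff ℝ (⊤ : ℕ∞) F) :
    ContDiff ℝ (⊤ : ℕ∞) (Dv v F) :=
  (hF.fderiv_right (by simp)).clm_apply contDiff_const

lemma slice_t {F : ℝ × ℝ × ℝ → ℝ} (hF : ContDiff ℝ (⊤ : ℕ∞) F) (t x y : ℝ) :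
    HasDerivAt (fun s => F (s, x, y)) (Dv (1,0,0) F (t,x,y)) t := by
  have h1 : HasDerivAt (fun s : ℝ => (s, x, y)) ((1:ℝ),(0:ℝ),(0:ℝ)) t :=
    (hasDerivAt_id t).prodMk ((hasDerivAt_const t x).prodMk (hasDerivAt_const t y))
  exact ((hF.differentiable (by simp) (t,x,y)).hasFDerivAt.comp_hasDerivAt t h1)

lemma slice_x {F : ℝ × ℝ × ℝ → ℝ} (hF : ContDiff ℝ (⊤ : ℕ∞) F) (t x y : ℝ) :
    HasDerivAt (fun s => F (t, s, y)) (Dv (0,1,0) F (t,x,y)) x := by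
  have h1 : HasDerivAt (fun s : ℝ => (t, s, y)) ((0:ℝ),(1:ℝ),(0:ℝ)) x :=
    (hasDerivAt_const x t).prodMk ((hasDerivAt_id x).prodMk (hasDerivAt_const x y))
  exact ((hF.differentiable (by simp) (t,x,y)).hasFDerivAt.comp_hasDerivAt x h1)

lemma slice_y {F : ℝ × ℝ × ℝ → ℝ} (hF : ContDiff ℝ (⊤ : ℕ∞) F) (t x y : ℝ) :
    HasDerivAt (fun s => F (t, x, s)) (Dv (0,0,1) F (t,x,y)) y := by
  have h1 : HasDerivAt (fun s : ℝ => (t, x, s)) ((0:ℝ),(0:ℝ),(1:ℝ)) y :=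
    (hasDerivAt_const y t).prodMk ((hasDerivAt_const y x).prodMk (hasDerivAt_id y))
  exact ((hF.differentiable (by simp) (t,x,y)).hasFDerivAt.comp_hasDerivAt y h1)

lemma Dv_comm {F : ℝ × ℝ × ℝ → ℝ} (hF : ContDiff ℝ (⊤ : ℕ∞) F) (u v : ℝ × ℝ × ℝ) (p : ℝ × ℝ × ℝ) :
    Dv u (Dv v F) p = Dv v (Dv u F) p := by
  have hd : Differentiable ℝ (fderiv ℝ F) :=
    (hF.fderiv_right (m := (⊤ : ℕ∞)) (by simp)).differentiable (by simp)
  have key : ∀ u v : ℝ × ℝ × ℝ, Dv u (Dv v F) p = fderiv ℝ (fderiv ℝ F) p u v := by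
    intro u v
    have h : fderiv ℝ (fun p' => fderiv ℝ F p' v) p =
        (fderiv ℝ F p).comp (fderiv ℝ (fun _ : ℝ × ℝ × ℝ => v) p)
        + (fderiv ℝ (fderiv ℝ F) p).flip v :=
      fderiv_clm_apply (hd p) (differentiableAt_const v)
    simp only [fderiv_fun_const, Pi.zero_apply, ContinuousLinearMap.comp_zero, zero_add] at h
    show (fderiv ℝ (fun p' => fderiv ℝ F p' v) p) u = _
    rw [h]; rfl
  rw [key, key]
  exact second_derivative_symmetric (fun z => (hF.differentiable (by simp) z).hasFDerivAt)
    (hd p).hasFDerivAt u v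

/-- The triple (T,X,Y) with T = (1/2)w_x²,
X = w_x w_{xxx} − (1/2)w_{xx}² + (σ₁/(2(q+1)))w_x^{2(q+1)} + (a/(q+1))w_x^{q+1}w_y − (σ₂/2)w_y²,
Y = σ₂ w_x w_y − ((a−b−bq)/((q+1)(q+2)))w_x^{q+2}
satisfies the off-shell characteristic identity
D_tT + D_xX + D_yY = w_x·(w_{tx} + (σ₁w_x^{2q} + a w_x^{q−1}w_y)w_{xx}
+ b w_x^q w_{xy} + w_{xxxx} + σ₂w_{yy}) for all smooth w; hence it is a
conservation law of the modified gKP potential equation with multiplier Q = w_x. -/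
theorem stmt11 (q : ℕ) (hq : 0 < q) (a b σ₁ σ₂ : ℝ)
    (hσ₁ : σ₁ = 1 ∨ σ₁ = -1) (hσ₂ : σ₂ = 1 ∨ σ₂ = -1)
    (w : ℝ → ℝ → ℝ → ℝ)
    (hw : ContDiff ℝ (⊤ : ℕ∞) (fun p : ℝ × ℝ × ℝ => w p.1 p.2.1 p.2.2)) :
    ∀ t x y : ℝ,
      Dt (fun t x y => (1 / 2) * (Dx w t x y) ^ 2) t x y
      + Dx (fun t x y =>
          Dx w t x y * Dx (Dx (Dx w)) t x y
          - (1 / 2) * (Dx (Dx w) t x y) ^ 2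
          + (σ₁ / (2 * ((q : ℝ) + 1))) * (Dx w t x y) ^ (2 * (q + 1))
          + (a / ((q : ℝ) + 1)) * (Dx w t x y) ^ (q + 1) * Dy w t x y
          - (σ₂ / 2) * (Dy w t x y) ^ 2) t x y
      + Dy (fun t x y =>
          σ₂ * Dx w t x y * Dy w t x y
          - ((a - b - b * (q : ℝ)) / (((q : ℝ) + 1) * ((q : ℝ) + 2)))
              * (Dx w t x y) ^ (q + 2)) t x y
      = Dx w t x y *
          (Dt (Dx w) t x y
          + (σ₁ * (Dx w t x y) ^ (2 * q) + a * (Dx w t x y) ^ (q - 1) * Dy w t x y)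
              * Dx (Dx w) t x y
          + b * (Dx w t x y) ^ q * Dx (Dy w) t x y
          + Dx (Dx (Dx (Dx w))) t x y
          + σ₂ * Dy (Dy w) t x y) := by
  obtain ⟨k, rfl⟩ : ∃ k, q = k + 1 := ⟨q - 1, (Nat.succ_pred_eq_of_pos hq).symm⟩
  set W : ℝ × ℝ × ℝ → ℝ := fun p => w p.1 p.2.1 p.2.2 with hWdef
  have hWsm : ContDiff ℝ (⊤ : ℕ∞) W := hw
  have h1 : ContDiff ℝ (⊤ : ℕ∞) (Dv (0,1,0) W) := Dv_smooth _ hWsm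
  have h2 : ContDiff ℝ (⊤ : ℕ∞) (Dv (0,1,0) (Dv (0,1,0) W)) := Dv_smooth _ h1
  have h3 : ContDiff ℝ (⊤ : ℕ∞) (Dv (0,1,0) (Dv (0,1,0) (Dv (0,1,0) W))) := Dv_smooth _ h2
  have hy1 : ContDiff ℝ (⊤ : ℕ∞) (Dv (0,0,1) W) := Dv_smooth _ hWsm
  have ew1 : ∀ T X Y : ℝ, Dx w T X Y = Dv (0,1,0) W (T,X,Y) :=
    fun T X Y => (slice_x hWsm T X Y).deriv
  have ewy : ∀ T X Y : ℝ, Dy w T X Y = Dv (0,0,1) W (T,X,Y) :=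
    fun T X Y => (slice_y hWsm T X Y).deriv
  have ew2 : ∀ T X Y : ℝ, Dx (Dx w) T X Y = Dv (0,1,0) (Dv (0,1,0) W) (T,X,Y) := by
    intro T X Y
    show deriv (fun s => Dx w T s Y) X = _
    have h : (fun s => Dx w T s Y) = fun s => Dv (0,1,0) W (T,s,Y) :=
      funext fun s => ew1 T s Y
    rw [h]; exact (slice_x h1 T X Y).deriv
  have ew3 : ∀ T X Y : ℝ, Dx (Dx (Dx w)) T X Y
      = Dv (0,1,0) (Dv (0,1,0) (Dv (0,1,0) W)) (T,X,Y) := by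
    intro T X Y
    show deriv (fun s => Dx (Dx w) T s Y) X = _
    have h : (fun s => Dx (Dx w) T s Y) = fun s => Dv (0,1,0) (Dv (0,1,0) W) (T,s,Y) :=
      funext fun s => ew2 T s Y
    rw [h]; exact (slice_x h2 T X Y).deriv
  have ew4 : ∀ T X Y : ℝ, Dx (Dx (Dx (Dx w))) T X Y
      = Dv (0,1,0) (Dv (0,1,0) (Dv (0,1,0) (Dv (0,1,0) W))) (T,X,Y) := by
    intro T X Y
    show deriv (fun s => Dx (Dx (Dx w)) T s Y) X = _
    have h : (fun s => Dx (Dx (Dx w)) T s Y)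
        = fun s => Dv (0,1,0) (Dv (0,1,0) (Dv (0,1,0) W)) (T,s,Y) :=
      funext fun s => ew3 T s Y
    rw [h]; exact (slice_x h3 T X Y).deriv
  have ewxy : ∀ T X Y : ℝ, Dx (Dy w) T X Y = Dv (0,1,0) (Dv (0,0,1) W) (T,X,Y) := by
    intro T X Y
    show deriv (fun s => Dy w T s Y) X = _
    have h : (fun s => Dy w T s Y) = fun s => Dv (0,0,1) W (T,s,Y) :=
      funext fun s => ewy T s Y
    rw [h]; exact (slice_x hy1 T X Y).deriv
  have etx : ∀ T X Y : ℝ, Dt (Dx w) T X Y = Dv (1,0,0) (Dv (0,1,0) W) (T,X,Y) := by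
    intro T X Y
    show deriv (fun s => Dx w s X Y) T = _
    have h : (fun s => Dx w s X Y) = fun s => Dv (0,1,0) W (s,X,Y) :=
      funext fun s => ew1 s X Y
    rw [h]; exact (slice_t h1 T X Y).deriv
  have eyy : ∀ T X Y : ℝ, Dy (Dy w) T X Y = Dv (0,0,1) (Dv (0,0,1) W) (T,X,Y) := by
    intro T X Y
    show deriv (fun s => Dy w T X s) Y = _
    have h : (fun s => Dy w T X s) = fun s => Dv (0,0,1) W (T,X,s) :=
      funext fun s => ewy T X s
    rw [h]; exact (slice_y hy1 T X Y).deriv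
  intro t x y
  have hk2 : ((k : ℝ) + 2) ≠ 0 := by positivity
  have hk3 : ((k : ℝ) + 3) ≠ 0 := by positivity
  -- the three main derivative computations
  have hT : Dt (fun t x y => (1 / 2) * (Dx w t x y) ^ 2) t x y
      = Dv (0,1,0) W (t,x,y) * Dv (1,0,0) (Dv (0,1,0) W) (t,x,y) := by
    show deriv (fun s => (1 / 2 : ℝ) * (Dx w s x y) ^ 2) t = _
    have h : (fun s => (1 / 2 : ℝ) * (Dx w s x y) ^ 2)
        = fun s => (1 / 2 : ℝ) * (Dv (0,1,0) W (s,x,y)) ^ 2 :=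
      funext fun s => by rw [ew1]
    rw [h, (((slice_t h1 t x y).fun_pow 2).const_mul (1/2 : ℝ)).deriv]
    ring
  have hX : Dx (fun t x y =>
          Dx w t x y * Dx (Dx (Dx w)) t x y
          - (1 / 2) * (Dx (Dx w) t x y) ^ 2
          + (σ₁ / (2 * (((k+1 : ℕ) : ℝ) + 1))) * (Dx w t x y) ^ (2 * ((k+1) + 1))
          + (a / (((k+1 : ℕ) : ℝ) + 1)) * (Dx w t x y) ^ ((k+1) + 1) * Dy w t x y
          - (σ₂ / 2) * (Dy w t x y) ^ 2) t x y
      = Dv (0,1,0) W (t,x,y) * Dv (0,1,0) (Dv (0,1,0) (Dv (0,1,0) (Dv (0,1,0) W))) (t,x,y)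
        + σ₁ * (Dv (0,1,0) W (t,x,y)) ^ (2*k+3) * Dv (0,1,0) (Dv (0,1,0) W) (t,x,y)
        + a * (Dv (0,1,0) W (t,x,y)) ^ (k+1) * Dv (0,1,0) (Dv (0,1,0) W) (t,x,y)
            * Dv (0,0,1) W (t,x,y)
        + (a / ((k:ℝ)+2)) * (Dv (0,1,0) W (t,x,y)) ^ (k+2)
            * Dv (0,1,0) (Dv (0,0,1) W) (t,x,y)
        - σ₂ * Dv (0,0,1) W (t,x,y) * Dv (0,1,0) (Dv (0,0,1) W) (t,x,y) := by
    show deriv (fun s =>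
          Dx w t s y * Dx (Dx (Dx w)) t s y
          - (1 / 2) * (Dx (Dx w) t s y) ^ 2
          + (σ₁ / (2 * (((k+1 : ℕ) : ℝ) + 1))) * (Dx w t s y) ^ (2 * ((k+1) + 1))
          + (a / (((k+1 : ℕ) : ℝ) + 1)) * (Dx w t s y) ^ ((k+1) + 1) * Dy w t s y
          - (σ₂ / 2) * (Dy w t s y) ^ 2) x = _
    have h : (fun s =>
          Dx w t s y * Dx (Dx (Dx w)) t s y
          - (1 / 2) * (Dx (Dx w) t s y) ^ 2
          + (σ₁ / (2 * (((k+1 : ℕ) : ℝ) + 1))) * (Dx w t s y) ^ (2 * ((k+1) + 1))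
          + (a / (((k+1 : ℕ) : ℝ) + 1)) * (Dx w t s y) ^ ((k+1) + 1) * Dy w t s y
          - (σ₂ / 2) * (Dy w t s y) ^ 2)
        = fun s =>
          Dv (0,1,0) W (t,s,y) * Dv (0,1,0) (Dv (0,1,0) (Dv (0,1,0) W)) (t,s,y)
          - (1 / 2) * (Dv (0,1,0) (Dv (0,1,0) W) (t,s,y)) ^ 2
          + (σ₁ / (2 * (((k+1 : ℕ) : ℝ) + 1))) * (Dv (0,1,0) W (t,s,y)) ^ (2 * ((k+1) + 1))
          + (a / (((k+1 : ℕ) : ℝ) + 1)) * (Dv (0,1,0) W (t,s,y)) ^ ((k+1) + 1)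
              * Dv (0,0,1) W (t,s,y)
          - (σ₂ / 2) * (Dv (0,0,1) W (t,s,y)) ^ 2 :=
      funext fun s => by rw [ew1, ew3, ew2, ewy]
    rw [h, (((((slice_x h1 t x y).fun_mul (slice_x h3 t x y)).fun_sub
        (((slice_x h2 t x y).fun_pow 2).const_mul (1/2 : ℝ))).fun_add
        (((slice_x h1 t x y).fun_pow (2 * ((k+1) + 1))).const_mul
          (σ₁ / (2 * (((k+1 : ℕ) : ℝ) + 1))))).fun_add
        ((((slice_x h1 t x y).fun_pow ((k+1) + 1)).const_mul
          (a / (((k+1 : ℕ) : ℝ) + 1))).fun_mul (slice_x hy1 t x y))).fun_sub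
        (((slice_x hy1 t x y).fun_pow 2).const_mul (σ₂ / 2)) |>.deriv]
    have e1 : 2 * (k + 1 + 1) - 1 = 2*k+3 := by omega
    have e2 : k + 1 + 1 - 1 = k + 1 := by omega
    rw [e1, e2]
    push_cast
    field_simp
    ring
  have hY : Dy (fun t x y =>
          σ₂ * Dx w t x y * Dy w t x y
          - ((a - b - b * (((k+1 : ℕ)) : ℝ)) / ((((k+1 : ℕ) : ℝ) + 1) * (((k+1 : ℕ) : ℝ) + 2)))
              * (Dx w t x y) ^ ((k+1) + 2)) t x y
      = σ₂ * Dv (0,0,1) (Dv (0,1,0) W) (t,x,y) * Dv (0,0,1) W (t,x,y)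
        + σ₂ * Dv (0,1,0) W (t,x,y) * Dv (0,0,1) (Dv (0,0,1) W) (t,x,y)
        - ((a - b - b * ((k:ℝ)+1)) / ((k:ℝ)+2)) * (Dv (0,1,0) W (t,x,y)) ^ (k+2)
            * Dv (0,0,1) (Dv (0,1,0) W) (t,x,y) := by
    show deriv (fun s =>
          σ₂ * Dx w t x s * Dy w t x s
          - ((a - b - b * (((k+1 : ℕ)) : ℝ)) / ((((k+1 : ℕ) : ℝ) + 1) * (((k+1 : ℕ) : ℝ) + 2)))
              * (Dx w t x s) ^ ((k+1) + 2)) y = _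
    have h : (fun s =>
          σ₂ * Dx w t x s * Dy w t x s
          - ((a - b - b * (((k+1 : ℕ)) : ℝ)) / ((((k+1 : ℕ) : ℝ) + 1) * (((k+1 : ℕ) : ℝ) + 2)))
              * (Dx w t x s) ^ ((k+1) + 2))
        = fun s =>
          σ₂ * Dv (0,1,0) W (t,x,s) * Dv (0,0,1) W (t,x,s)
          - ((a - b - b * (((k+1 : ℕ)) : ℝ)) / ((((k+1 : ℕ) : ℝ) + 1) * (((k+1 : ℕ) : ℝ) + 2)))
              * (Dv (0,1,0) W (t,x,s)) ^ ((k+1) + 2) :=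
      funext fun s => by rw [ew1, ewy]
    rw [h, ((((slice_y h1 t x y).const_mul σ₂).fun_mul (slice_y hy1 t x y)).fun_sub
        (((slice_y h1 t x y).fun_pow ((k+1) + 2)).const_mul
          ((a - b - b * (((k+1 : ℕ)) : ℝ)) /
            ((((k+1 : ℕ) : ℝ) + 1) * (((k+1 : ℕ) : ℝ) + 2)))) |>.deriv)]
    have e3 : k + 1 + 2 - 1 = k + 2 := by omega
    rw [e3]
    push_cast
    field_simp
    ring
  have hcomm : Dv (0,0,1) (Dv (0,1,0) W) (t,x,y) = Dv (0,1,0) (Dv (0,0,1) W) (t,x,y) :=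
    Dv_comm hWsm (0,0,1) (0,1,0) (t,x,y)
  rw [hT, hX, hY, ew1, ewy, etx, ew2, ewxy, ew4, eyy, hcomm]
  have e4 : k + 1 - 1 = k := by omega
  rw [e4]
  push_cast
  field_simp
  ring
end

section
/- Let c_min(θ) = sin²θ/cosθ for −π/2 < θ < π/2. For each c > 0, the equation c = c_min(θ) with 0 < θ < π/2 has the unique solution θ = ϑ(c) := arctan√((c/2)(√(c²+4) + c)). -/
/-!
Since `sin² θ = 1 - cos² θ`, the function `sin² θ / cos θ` equals `1 / cos θ - cos θ`, which is
strictly increasing on `[0, π/2)` because `cos` decreases there; this gives uniqueness. For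
existence, `sec ϑ(c) = √(1 + tan² ϑ(c))` is `x = (√(c² + 4) + c) / 2`, the positive root of
`x² - c x - 1 = 0`, so `1 / cos ϑ(c) - cos ϑ(c) = x - 1 / x = c`.
-/

open Real Set

theorem sin_sq_div_cos_eq_inv_cos_sub_cos (θ : ℝ) : sin θ ^ 2 / cos θ = (cos θ)⁻¹ - cos θ := by
  rcases eq_or_ne (cos θ) 0 with h | h
  · simp [h]
  · rw [sin_sq]
    field_simp

theorem strictMonoOn_sin_sq_div_cos : StrictMonoOn (fun θ ↦ sin θ ^ 2 / cos θ) (Ico 0 (π / 2)) := by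
  intro θ hθ φ hφ hθφ
  have hcos_φ : 0 < cos φ := cos_pos_of_mem_Ioo ⟨by linarith [pi_pos, hφ.1], hφ.2⟩
  have hcos : cos φ < cos θ := cos_lt_cos_of_nonneg_of_le_pi_div_two hθ.1 hφ.2.le hθφ
  simp only [sin_sq_div_cos_eq_inv_cos_sub_cos]
  linarith [inv_strictAntiOn hcos_φ (hcos_φ.trans hcos) hcos]

section Vartheta

variable (c : ℝ)

/-- `tan² ϑ(c)` in the notation of the paper. -/
noncomputable def tanSqVartheta : ℝ := c / 2 * (√(c ^ 2 + 4) + c)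

/-- `sec ϑ(c)` in the notation of the paper. -/
noncomputable def secVartheta : ℝ := (√(c ^ 2 + 4) + c) / 2

theorem sqrt_sq_add_four_sq : √(c ^ 2 + 4) ^ 2 = c ^ 2 + 4 := sq_sqrt (by positivity)

theorem secVartheta_pos : 0 < secVartheta c := by
  have : |c| < √(c ^ 2 + 4) := by
    rw [← sqrt_sq_eq_abs]
    exact sqrt_lt_sqrt (sq_nonneg c) (by linarith)
  unfold secVartheta
  linarith [neg_abs_le c]

theorem one_add_tanSqVartheta : 1 + tanSqVartheta c = secVartheta c ^ 2 := by
  unfold tanSqVartheta secVartheta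
  linear_combination (-1 / 4 : ℝ) * sqrt_sq_add_four_sq c

theorem secVartheta_sub_inv : secVartheta c - (secVartheta c)⁻¹ = c := by
  have hpos := secVartheta_pos c
  have hroot : secVartheta c ^ 2 - c * secVartheta c - 1 = 0 := by
    unfold secVartheta
    linear_combination (1 / 4 : ℝ) * sqrt_sq_add_four_sq c
  field_simp
  linear_combination hroot

variable {c}

theorem tanSqVartheta_pos (hc : 0 < c) : 0 < tanSqVartheta c := by
  have := secVartheta_pos c
  unfold secVartheta at this
  unfold tanSqVartheta
  positivity

theorem cos_arctan_sqrt_tanSqVartheta (hc : 0 ≤ c) :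
    cos (arctan √(tanSqVartheta c)) = (secVartheta c)⁻¹ := by
  have hν : 0 ≤ tanSqVartheta c := by
    rcases hc.eq_or_lt with rfl | hc
    · simp [tanSqVartheta]
    · exact (tanSqVartheta_pos hc).le
  rw [cos_arctan, sq_sqrt hν, one_add_tanSqVartheta, sqrt_sq (secVartheta_pos c).le, one_div]

theorem sin_sq_div_cos_arctan_sqrt_tanSqVartheta (hc : 0 ≤ c) :
    sin (arctan √(tanSqVartheta c)) ^ 2 / cos (arctan √(tanSqVartheta c)) = c := by
  rw [sin_sq_div_cos_eq_inv_cos_sub_cos, cos_arctan_sqrt_tanSqVartheta hc, inv_inv,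
    secVartheta_sub_inv]

theorem arctan_sqrt_tanSqVartheta_mem_Ioo (hc : 0 < c) :
    arctan √(tanSqVartheta c) ∈ Ioo 0 (π / 2) :=
  ⟨arctan_pos.2 (sqrt_pos.2 (tanSqVartheta_pos hc)), arctan_lt_pi_div_two _⟩

end Vartheta

/-- Let c_min(θ) = sin²θ/cosθ on (−π/2, π/2). For each c > 0 the equation
c = c_min(θ) with 0 < θ < π/2 has the unique solution
θ = ϑ(c) = arctan √((c/2)(√(c²+4) + c)). -/
theorem stmt16 (c : ℝ) (hc : 0 < c) :
    Real.arctan (Real.sqrt ((c / 2) * (Real.sqrt (c ^ 2 + 4) + c)))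
        ∈ Set.Ioo 0 (Real.pi / 2) ∧
    Real.sin (Real.arctan (Real.sqrt ((c / 2) * (Real.sqrt (c ^ 2 + 4) + c)))) ^ 2
        / Real.cos (Real.arctan (Real.sqrt ((c / 2) * (Real.sqrt (c ^ 2 + 4) + c)))) = c ∧
    ∀ θ ∈ Set.Ioo 0 (Real.pi / 2),
      Real.sin θ ^ 2 / Real.cos θ = c →
        θ = Real.arctan (Real.sqrt ((c / 2) * (Real.sqrt (c ^ 2 + 4) + c))) := by
  have hmem := arctan_sqrt_tanSqVartheta_mem_Ioo hc
  have hsol := sin_sq_div_cos_arctan_sqrt_tanSqVartheta hc.le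
  exact ⟨hmem, hsol, fun θ hθ hθc ↦ strictMonoOn_sin_sq_div_cos.injOn
    (Ioo_subset_Ico_self hθ) (Ioo_subset_Ico_self hmem) (hθc.trans hsol.symm)⟩
end
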